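/- arXiv:1304.1445 — 2 statements merged into one kernel-verified Lean document; each statement's English description precedes it below -/
import Mathlib

section
/- If an iterated function system generated by homeomorphisms f_1,...,f_k of a compact metric space X contains a minimal homeomorphism h (i.e., h is some composition of the generators and every h-orbit is dense in X), then for any probability P on the sequence space {1,...,k}^N in which each symbol has conditional probability at least p > 0 at every step, there exists a set Ω of sequences with P(Ω)=1 such that for every ω ∈ Ω and every x ∈ X, the fiberwise orbit {f_{ω_n} ∘ ... ∘ f_{ω_1}(x) : n ∈ N} is dense in X. -/
open MeasureTheory Set ENNReal

def seqComp {X : Type*} {k : ℕ} (f : Fin k → X → X) (ω : ℕ → Fin k) : ℕ → X → X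
  | 0 => id
  | n + 1 => fun x => f (ω n) (seqComp f ω n x)

def listComp {X : Type*} {k : ℕ} (f : Fin k → X → X) (l : List (Fin k)) : X → X :=
  fun x => l.foldl (fun y i => f i y) x

/-!
Let `h = f_{α_s} ∘ ⋯ ∘ f_{α_1}` be the minimal element. By compactness of `X × X` there is, for
each `ε > 0`, an `N` such that every `y` comes `ε`-close to every `z` within `N` iterates of `h`.
If `ω` contains the word `α^{N+1}` at some position `m`, the fibred orbit of `x` visits `h^j y`
for `1 ≤ j ≤ N + 1`, where `y` is its point at time `m`, so it comes `ε`-close to every `z`.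
Almost every `ω` contains every finite word `u`: cutting `ω` into consecutive blocks of length
`|u|`, the lower bound on conditional probabilities shows that the first `m` blocks all differ
from `u` with probability at most `(1 - p ^ |u|) ^ m`.
-/

section Dynamics

variable {X : Type*}

theorem exists_iterate_dist_lt_of_forall_dense_orbit [MetricSpace X] [CompactSpace X]
    {h : X → X} (hc : Continuous h) (hd : ∀ x, Dense (range fun n : ℕ => h^[n] x))
    {ε : ℝ} (hε : 0 < ε) : ∃ N, ∀ y z : X, ∃ j ≤ N, dist (h^[j] y) z < ε := by
  let U : ℕ → Set (X × X) := fun N => ⋃ j ≤ N, {q | dist (h^[j] q.1) q.2 < ε}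
  have hU_open : ∀ N, IsOpen (U N) := fun N => isOpen_biUnion fun j _ =>
    isOpen_lt (((hc.iterate j).comp continuous_fst).dist continuous_snd) continuous_const
  have hU_cover : univ ⊆ ⋃ N, U N := fun q _ => by
    obtain ⟨n, hn⟩ := DenseRange.exists_dist_lt (hd q.1) q.2 hε
    exact mem_iUnion.2 ⟨n, mem_iUnion₂.2 ⟨n, le_rfl, by rwa [dist_comm] at hn⟩⟩
  have hU_mono : Monotone U := fun _ _ hNM =>
    biUnion_subset_biUnion_left fun _ hj => le_trans hj hNM
  obtain ⟨N, hN⟩ := isCompact_univ.elim_directed_cover U hU_open hU_cover hU_mono.directed_le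
  exact ⟨N, fun y z => by simpa [U] using hN (mem_univ (y, z))⟩

variable {k : ℕ}

theorem listComp_append (f : Fin k → X → X) (u v : List (Fin k)) :
    listComp f (u ++ v) = listComp f v ∘ listComp f u := by
  funext x
  simp [listComp, List.foldl_append]

theorem listComp_flatten_replicate (f : Fin k → X → X) (l : List (Fin k)) (n : ℕ) :
    listComp f (List.replicate n l).flatten = (listComp f l)^[n] := by
  induction n with
  | zero => rfl
  | succ n ih => rw [List.replicate_succ, List.flatten_cons, listComp_append, ih,
      Function.iterate_succ]

theorem continuous_listComp [TopologicalSpace X] {f : Fin k → X → X}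
    (hf : ∀ i, Continuous (f i)) (l : List (Fin k)) : Continuous (listComp f l) := by
  induction l with
  | nil => exact continuous_id
  | cons a l ih => exact ih.comp (hf a)

def wordOccursAt : List (Fin k) → ℕ → Set (ℕ → Fin k)
  | [], _ => univ
  | a :: u, n => {ω | ω n = a} ∩ wordOccursAt u (n + 1)

theorem wordOccursAt_append (u v : List (Fin k)) (n : ℕ) :
    wordOccursAt (u ++ v) n = wordOccursAt u n ∩ wordOccursAt v (n + u.length) := by
  induction u generalizing n with
  | nil => simp [wordOccursAt]
  | cons a u ih => simp only [List.cons_append, wordOccursAt, ih, inter_assoc, List.length_cons,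
      add_right_comm n 1, add_assoc]

theorem seqComp_add_length_of_mem_wordOccursAt (f : Fin k → X → X) {ω : ℕ → Fin k}
    {u : List (Fin k)} {n : ℕ} (hω : ω ∈ wordOccursAt u n) (x : X) :
    seqComp f ω (n + u.length) x = listComp f u (seqComp f ω n x) := by
  induction u generalizing n with
  | nil => rfl
  | cons a u ih =>
    obtain ⟨ha, hu⟩ := hω
    calc seqComp f ω (n + (a :: u).length) x = seqComp f ω (n + 1 + u.length) x := by
          rw [List.length_cons, add_comm u.length, add_assoc]
      _ = listComp f u (seqComp f ω (n + 1) x) := ih hu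
      _ = listComp f (a :: u) (seqComp f ω n x) := by rw [← show ω n = a from ha]; rfl

theorem dense_range_seqComp_of_forall_exists_wordOccursAt [MetricSpace X] [CompactSpace X]
    {f : Fin k → X → X} (hf : ∀ i, Continuous (f i)) {l : List (Fin k)} (hl : l ≠ [])
    (hdense : ∀ x, Dense (range fun n : ℕ => (listComp f l)^[n] x)) {ω : ℕ → Fin k}
    (hω : ∀ N, ∃ n, ω ∈ wordOccursAt (List.replicate N l).flatten n) (x : X) :
    Dense (range fun n : ℕ => seqComp f ω (n + 1) x) := by
  refine Metric.dense_iff.2 fun z ε hε => ?_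
  obtain ⟨N, hN⟩ :=
    exists_iterate_dist_lt_of_forall_dense_orbit (continuous_listComp hf l) hdense hε
  obtain ⟨m, hm⟩ := hω (N + 1)
  obtain ⟨j, hjN, hj⟩ := hN (listComp f l (seqComp f ω m x)) z
  have hread : ω ∈ wordOccursAt (List.replicate (j + 1) l).flatten m := by
    rw [show N + 1 = j + 1 + (N - j) by omega, List.replicate_add, List.flatten_append,
      wordOccursAt_append] at hm
    exact hm.1
  have hlen : (List.replicate (j + 1) l).flatten.length ≠ 0 := by simp [hl]
  obtain ⟨n, hn⟩ : ∃ n, n + 1 = m + (List.replicate (j + 1) l).flatten.length :=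
    ⟨_, Nat.sub_add_cancel (by omega)⟩
  refine ⟨seqComp f ω (n + 1) x, ?_, n, rfl⟩
  rwa [Metric.mem_ball, hn, seqComp_add_length_of_mem_wordOccursAt f hread,
    listComp_flatten_replicate, Function.iterate_succ_apply]

end Dynamics

section WordOccurrence

variable {k : ℕ}

abbrev prefixMeasurableSpace (k n : ℕ) : MeasurableSpace (ℕ → Fin k) :=
  MeasurableSpace.comap (fun (ω : ℕ → Fin k) (j : Fin n) => ω j) MeasurableSpace.pi

theorem prefixMeasurableSpace_le (n : ℕ) : prefixMeasurableSpace k n ≤ MeasurableSpace.pi :=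
  Measurable.comap_le (measurable_pi_lambda (fun (ω : ℕ → Fin k) (j : Fin n) => ω j)
    fun j => measurable_pi_apply (j : ℕ))

theorem prefixMeasurableSpace_mono : Monotone (prefixMeasurableSpace k) := by
  intro n m hnm
  change MeasurableSpace.comap
    ((fun (υ : Fin m → Fin k) (j : Fin n) => υ (Fin.castLE hnm j)) ∘
      fun (ω : ℕ → Fin k) (j : Fin m) => ω j) _ ≤ _
  rw [← MeasurableSpace.comap_comp]
  exact MeasurableSpace.comap_mono
    (measurable_pi_lambda _ fun j => measurable_pi_apply (Fin.castLE hnm j)).comap_le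

theorem measurableSet_prefix_coord {j n : ℕ} (hj : j < n) (a : Fin k) :
    MeasurableSet[prefixMeasurableSpace k n] {ω | ω j = a} :=
  MeasurableSpace.measurableSet_comap.2
    ⟨{υ | υ ⟨j, hj⟩ = a}, measurableSet_eq_fun (measurable_pi_apply _) measurable_const, rfl⟩

theorem measurableSet_prefix_wordOccursAt (u : List (Fin k)) (n : ℕ) :
    MeasurableSet[prefixMeasurableSpace k (n + u.length)] (wordOccursAt u n) := by
  induction u generalizing n with
  | nil => exact MeasurableSet.univ
  | cons a u ih =>
    rw [List.length_cons, ← add_assoc, add_right_comm]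
    exact (measurableSet_prefix_coord (by omega) a).inter (ih (n + 1))

theorem measurableSet_wordOccursAt (u : List (Fin k)) (n : ℕ) :
    MeasurableSet (wordOccursAt u n) :=
  prefixMeasurableSpace_le _ _ (measurableSet_prefix_wordOccursAt u n)

def CondProbLowerBound (P : Measure (ℕ → Fin k)) (p : ℝ≥0∞) : Prop :=
  ∀ (n : ℕ) (υ : Fin n → Fin k) (i : Fin k),
    p * P {ω | ∀ j : Fin n, ω (j : ℕ) = υ j} ≤ P {ω | (∀ j : Fin n, ω (j : ℕ) = υ j) ∧ ω n = i}

variable {P : Measure (ℕ → Fin k)} {p : ℝ≥0∞}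

theorem CondProbLowerBound.mul_measure_le_measure_inter (hP : CondProbLowerBound P p) {n : ℕ}
    {A : Set (ℕ → Fin k)} (hA : MeasurableSet[prefixMeasurableSpace k n] A) (a : Fin k) :
    p * P A ≤ P (A ∩ {ω | ω n = a}) := by
  classical
  obtain ⟨S, -, rfl⟩ := MeasurableSpace.measurableSet_comap.1 hA
  set π : (ℕ → Fin k) → Fin n → Fin k := fun ω j => ω j
  have hπ : ∀ υ, MeasurableSet (π ⁻¹' {υ}) := fun υ =>
    measurable_pi_lambda π (fun j => measurable_pi_apply (j : ℕ)) (measurableSet_singleton υ)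
  have hE : MeasurableSet {ω : ℕ → Fin k | ω n = a} :=
    measurableSet_eq_fun (measurable_pi_apply n) measurable_const
  have hS : π ⁻¹' S = π ⁻¹' ↑S.toFinset := by rw [coe_toFinset]
  rw [hS, ← Measure.restrict_apply' hE, ← sum_measure_preimage_singleton _ fun υ _ => hπ υ,
    ← sum_measure_preimage_singleton _ fun υ _ => hπ υ, Finset.mul_sum]
  refine Finset.sum_le_sum fun υ _ => ?_
  have hcyl : π ⁻¹' {υ} = {ω | ∀ j : Fin n, ω j = υ j} := Set.ext fun ω => funext_iff
  rw [Measure.restrict_apply (hπ υ), hcyl]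
  exact hP n υ a

theorem CondProbLowerBound.pow_length_mul_measure_le (hP : CondProbLowerBound P p)
    (u : List (Fin k)) {n : ℕ} {A : Set (ℕ → Fin k)}
    (hA : MeasurableSet[prefixMeasurableSpace k n] A) :
    p ^ u.length * P A ≤ P (A ∩ wordOccursAt u n) := by
  induction u generalizing n A with
  | nil => simp [wordOccursAt]
  | cons a u ih =>
    have hA' : MeasurableSet[prefixMeasurableSpace k (n + 1)] (A ∩ {ω | ω n = a}) :=
      (prefixMeasurableSpace_mono n.le_succ _ hA).inter
        (measurableSet_prefix_coord n.lt_succ_self a)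
    calc p ^ (a :: u).length * P A = p ^ u.length * (p * P A) := by
          rw [List.length_cons, pow_succ, mul_assoc]
      _ ≤ p ^ u.length * P (A ∩ {ω | ω n = a}) := by
          gcongr; exact hP.mul_measure_le_measure_inter hA a
      _ ≤ P (A ∩ {ω | ω n = a} ∩ wordOccursAt u (n + 1)) := ih hA'
      _ = P (A ∩ wordOccursAt (a :: u) n) := by rw [inter_assoc]; rfl

theorem CondProbLowerBound.measure_biInter_compl_wordOccursAt_le [IsProbabilityMeasure P]
    (hP : CondProbLowerBound P p) (u : List (Fin k)) (m : ℕ) :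
    P (⋂ j < m, (wordOccursAt u (j * u.length))ᶜ) ≤ (1 - p ^ u.length) ^ m := by
  induction m with
  | zero => simp
  | succ m ih =>
    set F := ⋂ j < m, (wordOccursAt u (j * u.length))ᶜ
    have hF : MeasurableSet[prefixMeasurableSpace k (m * u.length)] F :=
      MeasurableSet.iInter fun j => MeasurableSet.iInter fun hj =>
        (prefixMeasurableSpace_mono (by nlinarith) _
          (measurableSet_prefix_wordOccursAt u (j * u.length))).compl
    have hW := measurableSet_wordOccursAt u (m * u.length)
    calc P (⋂ j < m + 1, (wordOccursAt u (j * u.length))ᶜ)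
        = P F - P (F ∩ wordOccursAt u (m * u.length)) := by
          rw [biInter_lt_succ, ← sdiff_eq, ← measure_inter_add_sdiff F hW,
            ENNReal.add_sub_cancel_left (measure_ne_top _ _)]
      _ ≤ P F - p ^ u.length * P F := tsub_le_tsub_left (hP.pow_length_mul_measure_le u hF) _
      _ = (1 - p ^ u.length) * P F := by
          rw [ENNReal.sub_mul fun _ _ => measure_ne_top P F, one_mul]
      _ ≤ (1 - p ^ u.length) * (1 - p ^ u.length) ^ m := by gcongr
      _ = (1 - p ^ u.length) ^ (m + 1) := (pow_succ' _ _).symm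

theorem CondProbLowerBound.ae_exists_wordOccursAt [IsProbabilityMeasure P]
    (hP : CondProbLowerBound P p) (hp : p ≠ 0) (u : List (Fin k)) :
    ∀ᵐ ω ∂P, ∃ n, ω ∈ wordOccursAt u n := by
  rw [ae_iff]
  have hsub : ∀ m,
      {ω | ¬∃ n, ω ∈ wordOccursAt u n} ⊆ ⋂ j < m, (wordOccursAt u (j * u.length))ᶜ :=
    fun m ω hω => mem_iInter₂.2 fun j _ hj => hω ⟨_, hj⟩
  have hlt : 1 - p ^ u.length < 1 := ENNReal.sub_lt_self one_ne_top one_ne_zero (pow_ne_zero _ hp)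
  exact le_antisymm (ge_of_tendsto' (ENNReal.tendsto_pow_atTop_nhds_zero_of_lt_one hlt)
    fun m => (measure_mono (hsub m)).trans (hP.measure_biInter_compl_wordOccursAt_le u m)) bot_le

end WordOccurrence

theorem minimal_map_implies_minimality_of_ae_orbital_branch_general
    {X : Type*} [MetricSpace X] [CompactSpace X] {k : ℕ}
    (f : Fin k → X ≃ₜ X)
    -- the IFS contains a minimal homeomorphism `h = f_{α_s} ∘ ... ∘ f_{α_1}`
    (hmin : ∃ l : List (Fin k), l ≠ [] ∧
      ∀ x : X, Dense (Set.range fun n : ℕ => (listComp (fun i => ⇑(f i)) l)^[n] x))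
    (P : Measure (ℕ → Fin k)) [IsProbabilityMeasure P] (p : ℝ≥0∞)
    (hp0 : 0 < p)
    -- each symbol appears with conditional probability at least `p`, regardless of the past
    (hP : ∀ (n : ℕ) (υ : Fin n → Fin k) (i : Fin k),
      p * P {ω | ∀ j : Fin n, ω (j : ℕ) = υ j} ≤
        P {ω | (∀ j : Fin n, ω (j : ℕ) = υ j) ∧ ω n = i}) :
    ∃ Ω : Set (ℕ → Fin k), P Ω = 1 ∧
      ∀ ω ∈ Ω, ∀ x : X,
        Dense (Set.range fun n : ℕ => seqComp (fun i => ⇑(f i)) ω (n + 1) x) := by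
  obtain ⟨l, hl, hdense⟩ := hmin
  let Ω := ⋂ N, ⋃ n, wordOccursAt (List.replicate N l).flatten n
  have hΩ : MeasurableSet Ω := .iInter fun N => .iUnion fun n => measurableSet_wordOccursAt _ n
  have hP' : CondProbLowerBound P p := hP
  refine ⟨Ω, (mem_ae_iff_prob_eq_one hΩ).1 ?_, fun ω hω x => ?_⟩
  · filter_upwards [ae_all_iff.2 fun N =>
      hP'.ae_exists_wordOccursAt hp0.ne' (List.replicate N l).flatten] with ω hω
    simpa only [Ω, mem_iInter, mem_iUnion] using hω
  · exact dense_range_seqComp_of_forall_exists_wordOccursAt (fun i => (f i).continuous) hl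
      hdense (by simpa only [Ω, mem_iInter, mem_iUnion] using hω) x

theorem minimal_map_implies_minimality_of_ae_orbital_branch
    {X : Type*} [MetricSpace X] [CompactSpace X] {k : ℕ}
    (f : Fin k → X ≃ₜ X)
    -- the IFS contains a minimal homeomorphism `h = f_{α_s} ∘ ... ∘ f_{α_1}`
    (hmin : ∃ l : List (Fin k), l ≠ [] ∧
      ∀ x : X, Dense (Set.range fun n : ℕ => (listComp (fun i => ⇑(f i)) l)^[n] x))
    (P : Measure (ℕ → Fin k)) [IsProbabilityMeasure P] (p : ℝ≥0∞)
    (hp0 : 0 < p) (hpk : p ≤ 1 / k)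
    -- each symbol appears with conditional probability at least `p`, regardless of the past
    (hP : ∀ (n : ℕ) (υ : Fin n → Fin k) (i : Fin k),
      p * P {ω | ∀ j : Fin n, ω (j : ℕ) = υ j} ≤
        P {ω | (∀ j : Fin n, ω (j : ℕ) = υ j) ∧ ω n = i}) :
    ∃ Ω : Set (ℕ → Fin k), P Ω = 1 ∧
      ∀ ω ∈ Ω, ∀ x : X,
        Dense (Set.range fun n : ℕ => seqComp (fun i => ⇑(f i)) ω (n + 1) x) :=
  minimal_map_implies_minimality_of_ae_orbital_branch_general f hmin P p hp0 hP
end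

section
/- Suppose F, G, g are C^1 diffeomorphisms of the circle, a is a hyperbolic attracting fixed point of g (|Dg(a)| < 1), V is a nondegenerate closed arc with F(V) contained in the basin of attraction of a, and G(a) lies in the interior of V. Then for all sufficiently large m, the map G ∘ g^m ∘ F is a contraction of V into itself and hence has a unique fixed point in V, which is a hyperbolic attracting fixed point of G ∘ g^m ∘ F. -/
/-!
Near the hyperbolic attractor `a` the map `g` is a `K`-contraction (`K < 1`) of a small closed
ball `B` around `a`. Since `F` and `g` are increasing, once both endpoints of `F(V)` have entered
`B` at a common time `N`, all of `g^N(F(V))` lies in `B`. Afterwards `g^p` shrinks `B` onto `a` at rate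
`K^p`, so `G ∘ g^(p+N) ∘ F` maps `V` into any prescribed neighbourhood of `G a`, in particular
into `int V`, with Lipschitz constant `Lip(G|B) · K^p · Lip(g^N ∘ F)` tending to `0`. The Banach
fixed point lies in `int V`, where the Lipschitz bound also bounds the derivative.
-/

open Set Filter Metric Topology Function
open scoped NNReal

theorem ContDiff.iterate {𝕜 E : Type*} [NontriviallyNormedField 𝕜] [NormedAddCommGroup E]
    [NormedSpace 𝕜 E] {n : WithTop ℕ∞} {f : E → E} (hf : ContDiff 𝕜 n f) :
    ∀ k, ContDiff 𝕜 n f^[k]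
  | 0 => contDiff_id
  | k + 1 => by rw [iterate_succ']; exact hf.comp (hf.iterate k)

section Lipschitz

variable {α : Type*} {f : α → α} {s : Set α} {K : ℝ≥0}

theorem LipschitzOnWith.iterate [PseudoEMetricSpace α] (hf : LipschitzOnWith K f s)
    (hs : MapsTo f s s) : ∀ n, LipschitzOnWith (K ^ n) f^[n] s
  | 0 => by simpa using LipschitzWith.id.lipschitzOnWith
  | n + 1 => by
    rw [pow_succ', iterate_succ']
    exact hf.comp (hf.iterate hs n) (hs.iterate n)

theorem LipschitzOnWith.mapsTo_closedBall [PseudoMetricSpace α] {a : α} {r : ℝ}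
    (hf : LipschitzOnWith K f (closedBall a r)) (hK : K ≤ 1) (ha : f a = a) :
    MapsTo f (closedBall a r) (closedBall a r) := by
  intro x hx
  have ha_mem : a ∈ closedBall a r := mem_closedBall_self (dist_nonneg.trans hx)
  calc dist (f x) a = dist (f x) (f a) := by rw [ha]
    _ ≤ K * dist x a := hf.dist_le_mul x hx a ha_mem
    _ ≤ 1 * r := mul_le_mul (by exact_mod_cast hK) hx dist_nonneg zero_le_one
    _ = r := one_mul r

theorem LipschitzOnWith.exists_unique_isFixedPt [MetricSpace α] (hsc : IsComplete s)
    (hne : s.Nonempty) (hsf : MapsTo f s s) (hK : K < 1) (hf : LipschitzOnWith K f s) :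
    ∃ y ∈ s, IsFixedPt f y ∧ ∀ z ∈ s, IsFixedPt f z → z = y := by
  have hc : ContractingWith K (hsf.restrict f s s) := ⟨hK, hf.mapsToRestrict hsf⟩
  obtain ⟨x, hx⟩ := hne
  obtain ⟨y, hy, hfy, -⟩ := hc.exists_fixedPoint' hsc hsf hx (edist_ne_top x (f x))
  refine ⟨y, hy, hfy, fun z hz hfz => ?_⟩
  have hyz : (⟨z, hz⟩ : s) = ⟨y, hy⟩ :=
    hc.fixedPoint_unique' (Subtype.ext hfz) (Subtype.ext hfy)
  exact congrArg Subtype.val hyz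

end Lipschitz

theorem exists_lipschitzOnWith_closedBall_of_norm_deriv_lt_one {𝕜 : Type*} [RCLike 𝕜]
    {g : 𝕜 → 𝕜} {a : 𝕜} (hg : ContDiffAt 𝕜 1 g a) (hderiv : ‖deriv g a‖ < 1) :
    ∃ K : ℝ≥0, K < 1 ∧ ∃ d > 0, LipschitzOnWith K g (closedBall a d) := by
  have hderiv' : ‖fderiv 𝕜 g a‖₊ < 1 := by
    rw [← NNReal.coe_lt_coe, coe_nnnorm, ← norm_deriv_eq_norm_fderiv]
    exact hderiv
  obtain ⟨K, hgK, hK⟩ := exists_between hderiv'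
  obtain ⟨t, ht, hlip⟩ := hg.exists_lipschitzOnWith_of_nnnorm_lt K hgK
  obtain ⟨d, hd, hdt⟩ := nhds_basis_closedBall.mem_iff.1 ht
  exact ⟨K, hK, d, hd, hlip.mono hdt⟩

section Attractor

variable {α β γ : Type*} [PseudoMetricSpace α] [PseudoMetricSpace β]
  {g : α → α} {a : α} {d : ℝ} {K : ℝ≥0}

theorem eventually_mapsTo_iterate_closedBall (hK : K < 1)
    (hg : LipschitzOnWith K g (closedBall a d)) (ha : g a = a) {W : Set α} (hW : W ∈ 𝓝 a) :
    ∀ᶠ n in atTop, MapsTo g^[n] (closedBall a d) W := by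
  obtain ⟨ε, hε, hεW⟩ := nhds_basis_ball.mem_iff.1 hW
  have hrate : Tendsto (fun n : ℕ => (K : ℝ) ^ n * d) atTop (𝓝 0) := by
    simpa using (tendsto_pow_atTop_nhds_zero_of_lt_one K.coe_nonneg hK).mul_const d
  filter_upwards [hrate.eventually_lt_const hε] with n hn x hx
  have ha_mem : a ∈ closedBall a d := mem_closedBall_self (dist_nonneg.trans hx)
  have hgn := hg.iterate (hg.mapsTo_closedBall hK.le ha) n
  apply hεW
  calc dist (g^[n] x) a = dist (g^[n] x) (g^[n] a) := by rw [iterate_fixed ha]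
    _ ≤ (K ^ n : ℝ≥0) * dist x a := hgn.dist_le_mul x hx a ha_mem
    _ ≤ (K : ℝ) ^ n * d := by push_cast; exact mul_le_mul_of_nonneg_left hx (by positivity)
    _ < ε := hn

variable {Φ : γ → α} {G : α → β} {V : Set γ}

theorem eventually_mapsTo_comp_iterate (hK : K < 1) (hg : LipschitzOnWith K g (closedBall a d))
    (ha : g a = a) (hΦ : MapsTo Φ V (closedBall a d)) (hG : ContinuousAt G a) {U : Set β}
    (hU : U ∈ 𝓝 (G a)) : ∀ᶠ n in atTop, MapsTo (G ∘ g^[n] ∘ Φ) V U := by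
  filter_upwards [eventually_mapsTo_iterate_closedBall hK hg ha (hG.preimage_mem_nhds hU)]
    with n hn
  exact (mapsTo_preimage G U).comp (hn.comp hΦ)

theorem eventually_exists_lipschitzOnWith_comp_iterate_lt_one [PseudoMetricSpace γ] (hK : K < 1)
    (hg : LipschitzOnWith K g (closedBall a d)) (ha : g a = a) {LΦ LG : ℝ≥0}
    (hΦ : LipschitzOnWith LΦ Φ V) (hΦV : MapsTo Φ V (closedBall a d))
    (hG : LipschitzOnWith LG G (closedBall a d)) :
    ∀ᶠ n in atTop, ∃ K' : ℝ≥0, K' < 1 ∧ LipschitzOnWith K' (G ∘ g^[n] ∘ Φ) V := by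
  have hgB := hg.mapsTo_closedBall hK.le ha
  have hrate : Tendsto (fun n : ℕ => LG * (K ^ n * LΦ)) atTop (𝓝 0) := by
    simpa using ((NNReal.tendsto_pow_atTop_nhds_zero_of_lt_one hK).mul_const LΦ).const_mul LG
  filter_upwards [hrate.eventually_lt_const zero_lt_one] with n hn
  exact ⟨_, hn, hG.comp ((hg.iterate hgB n).comp hΦ hΦV) ((hgB.iterate n).comp hΦV)⟩

end Attractor

theorem exists_unique_attracting_fixedPt_of_mapsTo_Ioo {f : ℝ → ℝ} {u v : ℝ}
    (huv : u ≤ v) (hf : MapsTo f (Icc u v) (Ioo u v)) {K : ℝ≥0} (hK : K < 1)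
    (hlip : LipschitzOnWith K f (Icc u v)) :
    ∃ q ∈ Icc u v, f q = q ∧ (∀ q' ∈ Icc u v, f q' = q' → q' = q) ∧ |deriv f q| < 1 := by
  obtain ⟨q, hq, hfq, huniq⟩ := hlip.exists_unique_isFixedPt isClosed_Icc.isComplete
    (nonempty_Icc.2 huv) (hf.mono_right Ioo_subset_Icc_self) hK
  have hq_int : q ∈ Ioo u v := hfq ▸ hf hq
  have hderiv : ‖deriv f q‖ ≤ K :=
    norm_deriv_le_of_lipschitzOn (Icc_mem_nhds hq_int.1 hq_int.2) hlip
  refine ⟨q, hq, hfq, huniq, ?_⟩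
  rw [← Real.norm_eq_abs]
  exact hderiv.trans_lt (by exact_mod_cast hK)

theorem contraction_return_map_hyperbolic_fixed_point_general
    (F G g : ℝ → ℝ)
    (hF : ContDiff ℝ 1 F) (hG : ContDiff ℝ 1 G) (hg : ContDiff ℝ 1 g)
    (hFm : StrictMono F) (hgm : StrictMono g)
    (a : ℝ) (ha : g a = a) (hhyp : |deriv g a| < 1)
    (v₁ v₂ : ℝ) (hv : v₁ < v₂)
    (hFV : F '' Set.Icc v₁ v₂ ⊆ {x | Tendsto (fun n : ℕ => g^[n] x) atTop (nhds a)})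
    (hGa : G a ∈ Set.Ioo v₁ v₂) :
    ∃ M : ℕ, ∀ m ≥ M,
      Set.MapsTo (G ∘ g^[m] ∘ F) (Set.Icc v₁ v₂) (Set.Icc v₁ v₂) ∧
      (∃ K : NNReal, K < 1 ∧ LipschitzOnWith K (G ∘ g^[m] ∘ F) (Set.Icc v₁ v₂)) ∧
      ∃ q ∈ Set.Icc v₁ v₂, (G ∘ g^[m] ∘ F) q = q ∧
        (∀ q' ∈ Set.Icc v₁ v₂, (G ∘ g^[m] ∘ F) q' = q' → q' = q) ∧
        |deriv (G ∘ g^[m] ∘ F) q| < 1 := by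
  obtain ⟨K, hK, d, hd, hgK⟩ :=
    exists_lipschitzOnWith_closedBall_of_norm_deriv_lt_one hg.contDiffAt hhyp
  have hB : closedBall a d ∈ 𝓝 a := closedBall_mem_nhds a hd
  have hF₁ : ∀ᶠ n in atTop, g^[n] (F v₁) ∈ closedBall a d :=
    hFV (mem_image_of_mem F (left_mem_Icc.2 hv.le)) hB
  have hF₂ : ∀ᶠ n in atTop, g^[n] (F v₂) ∈ closedBall a d :=
    hFV (mem_image_of_mem F (right_mem_Icc.2 hv.le)) hB
  obtain ⟨N, hN₁, hN₂⟩ := (hF₁.and hF₂).exists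
  have hΦB : MapsTo (g^[N] ∘ F) (Icc v₁ v₂) (closedBall a d) :=
    ((hgm.monotone.iterate N).comp hFm.monotone).mapsTo_Icc.mono_right
      ((Real.closedBall_eq_Icc ▸ ordConnected_Icc).out hN₁ hN₂)
  obtain ⟨LΦ, hΦ⟩ := ((hg.iterate N).comp hF).contDiffOn.exists_lipschitzOnWith one_ne_zero
    (convex_Icc v₁ v₂) isCompact_Icc
  obtain ⟨LG, hGL⟩ := hG.contDiffOn.exists_lipschitzOnWith one_ne_zero (convex_closedBall a d)
    (isCompact_closedBall a d)
  have hlate := (eventually_mapsTo_comp_iterate hK hgK ha hΦB hG.continuous.continuousAt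
    (Ioo_mem_nhds hGa.1 hGa.2)).and
    (eventually_exists_lipschitzOnWith_comp_iterate_lt_one hK hgK ha hΦ hΦB hGL)
  obtain ⟨M, hM⟩ := eventually_atTop.1 hlate
  refine ⟨M + N, fun m hm => ?_⟩
  have hsplit : G ∘ g^[m] ∘ F = G ∘ g^[m - N] ∘ g^[N] ∘ F := by
    rw [← comp_assoc (g^[m - N]), ← iterate_add, Nat.sub_add_cancel (by omega)]
  obtain ⟨hmaps, K', hK', hlip⟩ := hM (m - N) (by omega)
  rw [hsplit]
  exact ⟨hmaps.mono_right Ioo_subset_Icc_self, ⟨K', hK', hlip⟩,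
    exists_unique_attracting_fixedPt_of_mapsTo_Ioo hv.le hmaps hK' hlip⟩

/-- Circle maps are represented by their degree-one lifts: `C¹` diffeomorphisms of the
circle correspond to strictly monotone `C¹` maps `ℝ → ℝ` commuting with `x ↦ x + 1`
and with nonvanishing derivative of the inverse (here we only need the lift data). -/
theorem contraction_return_map_hyperbolic_fixed_point
    (F G g : ℝ → ℝ)
    (hF : ContDiff ℝ 1 F) (hG : ContDiff ℝ 1 G) (hg : ContDiff ℝ 1 g)
    (hFm : StrictMono F) (hGm : StrictMono G) (hgm : StrictMono g)
    (hFl : ∀ x, F (x + 1) = F x + 1) (hGl : ∀ x, G (x + 1) = G x + 1)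
    (hgl : ∀ x, g (x + 1) = g x + 1)
    (a : ℝ) (ha : g a = a) (hhyp : |deriv g a| < 1)
    (v₁ v₂ : ℝ) (hv : v₁ < v₂) (hv1 : v₂ - v₁ < 1)
    (hFV : F '' Set.Icc v₁ v₂ ⊆ {x | Tendsto (fun n : ℕ => g^[n] x) atTop (nhds a)})
    (hGa : G a ∈ Set.Ioo v₁ v₂) :
    ∃ M : ℕ, ∀ m ≥ M,
      Set.MapsTo (G ∘ g^[m] ∘ F) (Set.Icc v₁ v₂) (Set.Icc v₁ v₂) ∧
      (∃ K : NNReal, K < 1 ∧ LipschitzOnWith K (G ∘ g^[m] ∘ F) (Set.Icc v₁ v₂)) ∧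
      ∃ q ∈ Set.Icc v₁ v₂, (G ∘ g^[m] ∘ F) q = q ∧
        (∀ q' ∈ Set.Icc v₁ v₂, (G ∘ g^[m] ∘ F) q' = q' → q' = q) ∧
        |deriv (G ∘ g^[m] ∘ F) q| < 1 :=
  contraction_return_map_hyperbolic_fixed_point_general F G g hF hG hg hFm hgm a ha hhyp v₁ v₂ hv
    hFV hGa
end
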